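/- arXiv:1612.06191 — 5 statements merged into one kernel-verified Lean document; each statement's English description precedes it below -/
import Mathlib

section
/- Let |R| = k and let c be a constraint of the form (r, r', ↕, ∀) (satisfied by A iff A(r) ∩ A(r') = ∅) or (r, r', ↕, ∃) (satisfied iff A(r) ≠ A(r')). Then c is k-bounded: for every relation A valid with respect to U × R and c, |core(A : U × R, c)| ≤ k. -/
def Complete {U R : Type*} (A : Set (U × R)) : Prop := ∀ r : R, ∃ u : U, (u, r) ∈ A

def Valid {U R : Type*} (B A : Set (U × R)) (c : Set (U × R) → Prop) : Prop :=
  A ⊆ B ∧ Complete A ∧ c A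

def Remove {U R : Type*} (A : Set (U × R)) (v : U) : Set (U × R) :=
  {p ∈ A | p.1 ≠ v}

def core {U R : Type*} (A B : Set (U × R)) (c : Set (U × R) → Prop) : Set U :=
  {u : U | ¬ Valid B (Remove A u) c}

theorem stmt_9 {U R : Type*} [Fintype U] [Fintype R] (r r' : R)
    (c : Set (U × R) → Prop)
    (hc : (c = fun A => {u : U | (u, r) ∈ A} ∩ {u : U | (u, r') ∈ A} = ∅) ∨
          (c = fun A => {u : U | (u, r) ∈ A} ≠ {u : U | (u, r') ∈ A}))
    (A : Set (U × R)) (hvalid : Valid Set.univ A c) :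
    (core A Set.univ c).ncard ≤ Fintype.card R := by
  classical
  obtain ⟨-, hcomp, hcA⟩ := hvalid
  let f : U → R := fun u =>
    if h : ∃ s : R, ∀ w : U, (w, s) ∈ A → w = u then h.choose
    else if (u, r) ∈ A then r else r'
  -- sole-resource property
  have hsolef : ∀ u (h : ∃ s : R, ∀ w : U, (w, s) ∈ A → w = u),
      ∀ w : U, (w, f u) ∈ A → w = u := by
    intro u h
    simp only [f, dif_pos h]
    exact h.choose_spec
  -- special users: no sole resource but in the core
  have hspecial : ∀ u ∈ core A Set.univ c,
      (¬ ∃ s : R, ∀ w : U, (w, s) ∈ A → w = u) →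
      ((∀ x : U, x ≠ u → ((x, r) ∈ A ↔ (x, r') ∈ A)) ∧
       ¬ ∀ x : U, ((x, r) ∈ A ↔ (x, r') ∈ A)) := by
    intro u hu hns
    push_neg at hns
    have hcomp' : Complete (Remove A u) := by
      intro s
      obtain ⟨w, hw, hne⟩ := hns s
      exact ⟨w, hw, hne⟩
    have hnc : ¬ c (Remove A u) := fun hcc =>
      hu ⟨fun p _ => trivial, hcomp', hcc⟩
    rcases hc with h1 | h1
    · exfalso
      apply hnc
      subst h1
      simp only [Set.eq_empty_iff_forall_notMem, Set.mem_inter_iff,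
        Set.mem_setOf_eq, Remove] at hcA ⊢
      rintro x ⟨⟨hx1, -⟩, ⟨hx2, -⟩⟩
      exact hcA x ⟨hx1, hx2⟩
    · subst h1
      simp only [not_not, Set.ext_iff, Set.mem_setOf_eq, Remove, ne_eq] at hnc hcA
      constructor
      · intro x hx
        have := hnc x
        simpa [hx] using this
      · intro h
        exact hcA (fun x => h x)
  have huniv : (Set.univ : Set R).ncard = Fintype.card R := by
    rw [Set.ncard_univ, Nat.card_eq_fintype_card]
  rw [← huniv]
  apply Set.ncard_le_ncard_of_injOn f (fun a _ => Set.mem_univ _) _ Set.finite_univ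
  -- key asymmetric lemma: sole vs special cannot collide
  have key : ∀ u ∈ core A Set.univ c, ∀ v ∈ core A Set.univ c,
      (∃ s : R, ∀ w : U, (w, s) ∈ A → w = u) →
      (¬ ∃ s : R, ∀ w : U, (w, s) ∈ A → w = v) → f u ≠ f v := by
    intro u hu v hv hsu hsv heq
    obtain ⟨heqoff, hneq⟩ := hspecial v hv hsv
    have hsole : ∀ w : U, (w, f v) ∈ A → w = u := by
      rw [← heq]; exact hsolef u hsu
    by_cases hvr : (v, r) ∈ A
    · -- f v = r
      have hfv : f v = r := by simp only [f, dif_neg hsv, if_pos hvr]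
      rw [hfv] at hsole
      have hvr' : (v, r') ∉ A := by
        intro hvr'
        apply hneq
        intro x
        by_cases hx : x = v
        · subst hx; exact ⟨fun _ => hvr', fun _ => hvr⟩
        · exact heqoff x hx
      obtain ⟨w, hw⟩ := hcomp r'
      have hwv : w ≠ v := fun h => hvr' (h ▸ hw)
      have hwr : (w, r) ∈ A := (heqoff w hwv).2 hw
      have h1 : w = u := hsole w hwr
      have h2 : v = u := hsole v hvr
      exact hwv (h1.trans h2.symm)
    · -- f v = r'
      have hfv : f v = r' := by simp only [f, dif_neg hsv, if_neg hvr]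
      rw [hfv] at hsole
      have hvr' : (v, r') ∈ A := by
        by_contra hvr'
        apply hneq
        intro x
        by_cases hx : x = v
        · subst hx; exact ⟨fun h => absurd h hvr, fun h => absurd h hvr'⟩
        · exact heqoff x hx
      obtain ⟨w, hw⟩ := hcomp r
      have hwv : w ≠ v := fun h => hvr (h ▸ hw)
      have hwr : (w, r') ∈ A := (heqoff w hwv).1 hw
      have h1 : w = u := hsole w hwr
      have h2 : v = u := hsole v hvr'
      exact hwv (h1.trans h2.symm)
  intro u hu v hv heq
  by_cases hsu : ∃ s : R, ∀ w : U, (w, s) ∈ A → w = u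
  · by_cases hsv : ∃ s : R, ∀ w : U, (w, s) ∈ A → w = v
    · obtain ⟨w, hw⟩ := hcomp (f u)
      have h1 : w = u := hsolef u hsu w hw
      have h2 : w = v := hsolef v hsv w (heq ▸ hw)
      exact h1.symm.trans h2
    · exact absurd heq (key u hu v hv hsu hsv)
  · by_cases hsv : ∃ s : R, ∀ w : U, (w, s) ∈ A → w = v
    · exact absurd heq.symm (key v hv u hu hsv hsu)
    · -- both special: at most one special user
      obtain ⟨heqoffu, hnequ⟩ := hspecial u hu hsu
      obtain ⟨heqoffv, -⟩ := hspecial v hv hsv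
      push_neg at hnequ
      obtain ⟨x, hx⟩ := hnequ
      have hxu : x = u := by
        by_contra h
        have := heqoffu x h
        tauto
      have hxv : x = v := by
        by_contra h
        have := heqoffv x h
        tauto
      exact hxu.symm.trans hxv
end

section
/- Let |R| = k ≥ 2 and let c be one of the constraints (r', r'', →, ∀) (satisfied iff A(r') ⊆ A(r'')), (r', r'', ↔, ∀) (satisfied iff A(r') = A(r'')), or (r', r'', ↔, ∃) (satisfied iff A(r') ∩ A(r'') ≠ ∅), with r' ≠ r''. Then c is (k−1)-bounded: for every A valid with respect to U × R and c, |core(A : U × R, c)| ≤ k − 1. -/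
theorem stmt_10 {U R : Type*} [Fintype U] [Fintype R] (r' r'' : R)
    (hne : r' ≠ r'') (hk : 2 ≤ Fintype.card R)
    (c : Set (U × R) → Prop)
    (hc : (c = fun A => {u : U | (u, r') ∈ A} ⊆ {u : U | (u, r'') ∈ A}) ∨
          (c = fun A => {u : U | (u, r') ∈ A} = {u : U | (u, r'') ∈ A}) ∨
          (c = fun A => ({u : U | (u, r') ∈ A} ∩ {u : U | (u, r'') ∈ A}).Nonempty))
    (A : Set (U × R)) (hvalid : Valid Set.univ A c) :
    (core A Set.univ c).ncard ≤ Fintype.card R - 1 := by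
  classical
  obtain ⟨-, hcomp, hcA⟩ := hvalid
  have hw : ∃ w : U, (w, r') ∈ A ∧ (w, r'') ∈ A := by
    rcases hc with h | h | h
    · subst h
      obtain ⟨u, hu⟩ := hcomp r'
      exact ⟨u, hu, hcA hu⟩
    · subst h
      obtain ⟨u, hu⟩ := hcomp r'
      refine ⟨u, hu, ?_⟩
      have h1 : u ∈ {u : U | (u, r') ∈ A} := hu
      rw [hcA] at h1
      exact h1
    · subst h
      obtain ⟨u, hu1, hu2⟩ := hcA
      exact ⟨u, hu1, hu2⟩
  obtain ⟨w, hw1, hw2⟩ := hw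
  set g : R → U := fun r => if r = r' ∨ r = r'' then w else (hcomp r).choose with hg
  have hgr' : g r' = w := by simp [hg]
  have hgmem : ∀ r : R, (g r, r) ∈ A ∨ (r = r' ∨ r = r'') := by
    intro r
    by_cases h : r = r' ∨ r = r''
    · exact Or.inr h
    · left
      simp only [hg, if_neg h]
      exact (hcomp r).choose_spec
  have hsub : core A Set.univ c ⊆ g '' ({r''}ᶜ) := by
    intro u hu
    simp only [core, Set.mem_setOf_eq] at hu
    by_contra hni
    apply hu
    refine ⟨Set.subset_univ _, ?_, ?_⟩
    · -- completeness of Remove A u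
      intro r
      by_contra hno
      push_neg at hno
      have hall : ∀ v : U, (v, r) ∈ A → v = u := by
        intro v hv
        by_contra hvu
        exact hno v ⟨hv, hvu⟩
      by_cases hr : r = r' ∨ r = r''
      · have hwu : w = u := by
          rcases hr with hr | hr
          · exact hall w (hr ▸ hw1)
          · exact hall w (hr ▸ hw2)
        exact hni ⟨r', fun h => hne (Set.mem_singleton_iff.mp h), by rw [hgr', hwu]⟩
      · push_neg at hr
        have hgu : g r = u := by
          rcases hgmem r with h | h
          · exact hall _ h
          · exact absurd h (by push_neg; exact hr)
        exact hni ⟨r, fun h => hr.2 (Set.mem_singleton_iff.mp h), hgu⟩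
    · -- constraint holds for Remove A u
      rcases hc with h | h | h
      · subst h
        intro v hv
        obtain ⟨hv1, hv2⟩ := hv
        exact ⟨hcA hv1, hv2⟩
      · subst h
        ext v
        constructor
        · rintro ⟨hv1, hv2⟩
          have : v ∈ {u : U | (u, r') ∈ A} := hv1
          rw [hcA] at this
          exact ⟨this, hv2⟩
        · rintro ⟨hv1, hv2⟩
          have : v ∈ {u : U | (u, r'') ∈ A} := hv1
          rw [← hcA] at this
          exact ⟨this, hv2⟩
      · subst h
        by_cases hwu : w = u
        · exact absurd ⟨r', fun h => hne (Set.mem_singleton_iff.mp h), by rw [hgr', hwu]⟩ hni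
        · exact ⟨w, ⟨hw1, hwu⟩, ⟨hw2, hwu⟩⟩
  calc (core A Set.univ c).ncard ≤ (g '' ({r''}ᶜ)).ncard :=
        Set.ncard_le_ncard hsub (Set.toFinite _)
    _ ≤ ({r''}ᶜ : Set R).ncard := Set.ncard_image_le (Set.toFinite _)
    _ = Fintype.card R - 1 := by
        rw [Set.compl_eq_univ_diff ({r''} : Set R),
          Set.ncard_diff (Set.subset_univ _), Set.ncard_univ, Set.ncard_singleton,
          Nat.card_eq_fintype_card]
end

section
/- Let |R| = k and c = (R', ≤, t) a local cardinality constraint, satisfied by A iff |⋃_{r ∈ R'} A(r)| ≤ t. Then c is k-bounded: removing all pairs of a user from a relation satisfying c never causes c to be violated, so for every A valid with respect to U × R and c, |core(A : U × R, c)| ≤ k. -/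
theorem stmt_11 {U R : Type*} [Fintype U] [Fintype R] (R' : Set R) (t : ℕ)
    (ht : 1 ≤ t)
    (c : Set (U × R) → Prop)
    (hc : c = fun A => (⋃ r ∈ R', {u : U | (u, r) ∈ A}).ncard ≤ t)
    (A : Set (U × R)) (hvalid : Valid Set.univ A c) :
    (core A Set.univ c).ncard ≤ Fintype.card R := by
  classical
  obtain ⟨-, hcomp, hcA⟩ := hvalid
  -- c holds for any Remove A u
  have hcRem : ∀ u : U, c (Remove A u) := by
    intro u
    subst hc
    refine le_trans (Set.ncard_le_ncard ?_ (Set.toFinite _)) hcA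
    intro x hx
    simp only [Set.mem_iUnion, Set.mem_setOf_eq] at hx ⊢
    obtain ⟨r, hr, hxr, -⟩ := hx
    exact ⟨r, hr, hxr⟩
  -- every core user has a resource it uniquely holds
  have hkey : ∀ u ∈ core A Set.univ c, ∃ r : R, ∀ w : U, (w, r) ∈ A → w = u := by
    intro u hu
    by_contra h
    push_neg at h
    apply hu
    refine ⟨Set.subset_univ _, ?_, hcRem u⟩
    intro r
    obtain ⟨w, hw, hwu⟩ := h r
    exact ⟨w, hw, hwu⟩
  rcases (core A Set.univ c).eq_empty_or_nonempty with he | ⟨u0, hu0⟩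
  · simp [he]
  choose f hf using hkey
  have : Nonempty R := ⟨f u0 hu0⟩
  set g : U → R := fun x => if h : x ∈ core A Set.univ c then f x h else Classical.arbitrary R with hg
  have hinj : Set.InjOn g (core A Set.univ c) := by
    intro x hx y hy hxy
    simp only [hg, dif_pos hx, dif_pos hy] at hxy
    obtain ⟨w, hw⟩ := hcomp (f y hy)
    have h1 := hf x hx w (hxy ▸ hw)
    have h2 := hf y hy w hw
    rw [← h1, h2]
  calc (core A Set.univ c).ncard ≤ (Set.univ : Set R).ncard :=
        Set.ncard_le_ncard_of_injOn g (fun a _ => Set.mem_univ _) hinj (Set.toFinite _)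
    _ = Fintype.card R := by simp [Set.ncard_univ, Nat.card_eq_fintype_card]
end

section
/- Let |R| = k and c = (R', ≥, t), satisfied by A iff |⋃_{r ∈ R'} A(r)| ≥ t. Then c is 2·max{k,t}-bounded: for every A valid with respect to U × R and c, |core(A : U × R, c)| ≤ 2·max{k, t}. -/
theorem stmt_12 {U R : Type*} [Fintype U] [Fintype R] (R' : Set R) (t : ℕ)
    (ht : 1 ≤ t)
    (c : Set (U × R) → Prop)
    (hc : c = fun A => t ≤ (⋃ r ∈ R', {u : U | (u, r) ∈ A}).ncard)
    (A : Set (U × R)) (hvalid : Valid Set.univ A c) :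
    (core A Set.univ c).ncard ≤ 2 * max (Fintype.card R) t := by
  subst hc
  obtain ⟨-, hcomp, hcard⟩ := hvalid
  set W : Set U := ⋃ r ∈ R', {u : U | (u, r) ∈ A} with hW
  choose g hg using hcomp
  have hunion : ∀ u : U, (⋃ r ∈ R', {u' : U | (u', r) ∈ Remove A u}) = W \ {u} := by
    intro u
    ext v
    simp only [hW, Set.mem_iUnion, Set.mem_diff, Set.mem_singleton_iff,
      Set.mem_setOf_eq, Remove]
    constructor
    · rintro ⟨r, hr, hv, hne⟩
      exact ⟨⟨r, hr, hv⟩, hne⟩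
    · rintro ⟨⟨r, hr, hv⟩, hne⟩
      exact ⟨r, hr, hv, hne⟩
  have hsub : core A Set.univ (fun A => t ≤ (⋃ r ∈ R', {u : U | (u, r) ∈ A}).ncard)
      ⊆ Set.range g ∪ (if W.ncard = t then W else ∅) := by
    intro u hu
    simp only [core, Valid, Set.mem_setOf_eq] at hu
    by_cases hC : Complete (Remove A u)
    · -- the cardinality condition fails
      have hlt : (W \ {u}).ncard < t := by
        by_contra h
        push_neg at h
        exact hu ⟨Set.subset_univ _, hC, by rw [hunion u]; exact h⟩
      have huW : u ∈ W := by
        by_contra huW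
        rw [Set.diff_singleton_eq_self huW] at hlt
        omega
      have hW1 : W.ncard ≤ (W \ {u}).ncard + 1 := by
        rw [Set.ncard_diff_singleton_add_one huW (Set.toFinite W)]
      have hWt : W.ncard = t := by omega
      right
      simp [hWt, huW]
    · -- completeness fails
      left
      simp only [Complete] at hC
      push_neg at hC
      obtain ⟨r, hr⟩ := hC
      have hgr : g r = u := by
        by_contra hne
        exact (hr (g r)) ⟨hg r, hne⟩
      exact ⟨r, hgr⟩
  calc (core A Set.univ _).ncard
      ≤ (Set.range g ∪ (if W.ncard = t then W else ∅)).ncard :=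
        Set.ncard_le_ncard hsub (Set.toFinite _)
    _ ≤ (Set.range g).ncard + (if W.ncard = t then W else ∅).ncard :=
        Set.ncard_union_le _ _
    _ ≤ Fintype.card R + t := by
        gcongr
        · calc (Set.range g).ncard = (g '' Set.univ).ncard := by rw [Set.image_univ]
            _ ≤ (Set.univ : Set R).ncard := Set.ncard_image_le (Set.toFinite _)
            _ = Fintype.card R := by rw [Set.ncard_univ, Nat.card_eq_fintype_card]
        · split
          · omega
          · simp
    _ ≤ 2 * max (Fintype.card R) t := by
        have h1 : Fintype.card R ≤ max (Fintype.card R) t := le_max_left _ _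
        have h2 : t ≤ max (Fintype.card R) t := le_max_right _ _
        omega
end

section
/- D-APEP with only universal binding-of-duty constraints reduces to completeness of an intersected base relation: define the equivalence relation on R generated by {(r, r') : (r,r',↔,∀) ∈ C}, and for r in an equivalence class T set A'_Bse(r) = ⋂_{r' ∈ T} A_Bse(r'). Then there exists a valid relation (authorized w.r.t. A_Bse, complete, with A(r) = A(r') for every constraint (r,r',↔,∀) ∈ C) if and only if A'_Bse(r) ≠ ∅ for every r ∈ R. -/
theorem stmt_18 {U R : Type*} (ABse : Set (U × R)) (C : Set (R × R)) :
    (∃ A : Set (U × R), A ⊆ ABse ∧ (∀ r : R, {u : U | (u, r) ∈ A}.Nonempty) ∧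
      ∀ p ∈ C, {u : U | (u, p.1) ∈ A} = {u : U | (u, p.2) ∈ A}) ↔
    (∀ r : R,
      (⋂ r' ∈ {r' : R | Relation.EqvGen (fun a b => (a, b) ∈ C) r r'},
        {u : U | (u, r') ∈ ABse}).Nonempty) := by
  constructor
  · rintro ⟨A, hsub, hne, hC⟩ r
    obtain ⟨u, hu⟩ := hne r
    have key : ∀ r₁ r₂, Relation.EqvGen (fun a b => (a, b) ∈ C) r₁ r₂ →
        {u : U | (u, r₁) ∈ A} = {u : U | (u, r₂) ∈ A} := by
      intro r₁ r₂ h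
      induction h with
      | rel a b hab => exact hC (a, b) hab
      | refl => rfl
      | symm _ _ _ ih => exact ih.symm
      | trans _ _ _ _ _ ih1 ih2 => exact ih1.trans ih2
    refine ⟨u, ?_⟩
    simp only [Set.mem_iInter]
    intro r' hr'
    have : u ∈ {u : U | (u, r') ∈ A} := (key r r' hr') ▸ hu
    exact hsub this
  · intro h
    refine ⟨{p | ∀ r', Relation.EqvGen (fun a b => (a, b) ∈ C) p.2 r' → (p.1, r') ∈ ABse},
      ?_, ?_, ?_⟩
    · intro p hp
      exact hp p.2 (Relation.EqvGen.refl p.2)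
    · intro r
      obtain ⟨u, hu⟩ := h r
      simp only [Set.mem_iInter] at hu
      exact ⟨u, fun r' hr' => hu r' hr'⟩
    · intro p hp
      have hpp : Relation.EqvGen (fun a b => (a, b) ∈ C) p.1 p.2 :=
        Relation.EqvGen.rel _ _ hp
      ext u
      simp only [Set.mem_setOf_eq]
      constructor
      · intro hu r' hr' 
        exact hu r' (Relation.EqvGen.trans _ _ _ hpp hr')
      · intro hu r' hr'
        exact hu r' (Relation.EqvGen.trans _ _ _ (Relation.EqvGen.symm _ _ hpp) hr')
end
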